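/- arXiv:1408.5267 — 2 statements merged into one kernel-verified Lean document; each statement's English description precedes it below -/
import Mathlib

section
/- Let Y be a continuous supermartingale with Doob–Meyer decomposition Y = Y₀ + M − K, where M is a continuous martingale with M₀ = 0 and K is a continuous nondecreasing adapted process with K₀ = 0. Suppose E[sup_{t≤T}|Y_t|²] < ∞. Then E[K_T²] < ∞ and E[⟨M⟩_T] < ∞. -/
/-!
Discretize `[0, T]` along the uniform grid `tᵢ = i T / n` and truncate `K` at a level `c`, writing
`aᵢ = min (K tᵢ) c`. Then `a_n² ≤ 2 ∑ aᵢ (K tᵢ₊₁ - K tᵢ) + ∑ (aᵢ₊₁ - aᵢ)²`. Since `aᵢ` is bounded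
and `ℱ tᵢ`-measurable, the martingale part of `K tᵢ₊₁ - K tᵢ = (Y tᵢ - Y tᵢ₊₁) + (M tᵢ₊₁ - M tᵢ)`
integrates to zero against it, and Abel summation bounds `∑ aᵢ (Y tᵢ - Y tᵢ₊₁)` by `2 a_n sup |Y|`.
By AM-GM, `E[a_n²] ≤ 16 E[sup |Y|²] + 2 E[∑ (aᵢ₊₁ - aᵢ)²]`, and the last term vanishes as the mesh
goes to zero because `min K c` is continuous and monotone. Letting `c → ∞` gives `E[K_T²] < ∞`;
then `M_T = Y_T - Y_0 + K_T` is square integrable, hence `⟨M⟩_T = M_T² - (M_T² - ⟨M⟩_T)` is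
integrable.
-/

open MeasureTheory Filter Set Topology

theorem sum_mul_sub_succ_le_two_mul {a y : ℕ → ℝ} {g : ℝ} (ha : Monotone a) (ha0 : 0 ≤ a 0)
    (hy : ∀ i, |y i| ≤ g) (n : ℕ) :
    ∑ i ∈ Finset.range n, a i * (y i - y (i + 1)) ≤ 2 * g * a n := by
  have hyg := fun i => abs_le.1 (hy i)
  have hpartial : ∀ n, ∑ i ∈ Finset.range n, a i * (y i - y (i + 1)) ≤ g * a n - a n * y n := by
    intro n
    induction n with
    | zero => simpa [mul_comm g] using mul_le_mul_of_nonneg_left (hyg 0).2 ha0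
    | succ n ih =>
      rw [Finset.sum_range_succ]
      nlinarith [mul_nonneg (sub_nonneg.2 (ha n.le_succ)) (sub_nonneg.2 (hyg (n + 1)).2)]
  nlinarith [hpartial n, mul_nonneg (ha0.trans (ha n.zero_le)) (neg_le_iff_add_nonneg.1 (hyg n).1)]

theorem sq_eq_sq_add_two_sum_mul_sub_add_sum_sq (a : ℕ → ℝ) (n : ℕ) :
    a n ^ 2 = a 0 ^ 2 + 2 * ∑ i ∈ Finset.range n, a i * (a (i + 1) - a i)
      + ∑ i ∈ Finset.range n, (a (i + 1) - a i) ^ 2 := by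
  induction n with
  | zero => simp
  | succ n ih =>
    simp only [Finset.sum_range_succ]
    linear_combination ih

theorem min_sub_min_le_sub {a b : ℝ} (c : ℝ) (h : b ≤ a) : min a c - min b c ≤ a - b := by
  rcases le_total a c with h1 | h1 <;> rcases le_total b c with h2 | h2 <;>
    simp only [min_eq_left, min_eq_right, h1, h2] <;> linarith

theorem sq_min_le_two_sum_mul_sub_add_sum_sq {k : ℕ → ℝ} (hk : Monotone k) (hk0 : k 0 = 0)
    {c : ℝ} (hc : 0 ≤ c) (n : ℕ) :
    min (k n) c ^ 2 ≤ 2 * ∑ i ∈ Finset.range n, min (k i) c * (k (i + 1) - k i)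
      + ∑ i ∈ Finset.range n, (min (k (i + 1)) c - min (k i) c) ^ 2 := by
  have hsum : ∑ i ∈ Finset.range n, min (k i) c * (min (k (i + 1)) c - min (k i) c)
      ≤ ∑ i ∈ Finset.range n, min (k i) c * (k (i + 1) - k i) :=
    Finset.sum_le_sum fun i _ => mul_le_mul_of_nonneg_left
      (min_sub_min_le_sub c (hk i.le_succ)) (le_min (hk0 ▸ hk i.zero_le) hc)
  have := sq_eq_sq_add_two_sum_mul_sub_add_sum_sq (fun i => min (k i) c) n
  simp only [hk0, min_eq_left hc] at this
  linarith

theorem sum_mul_sub_succ_le_sq_div_four_add {a y : ℕ → ℝ} {h : ℝ} (ha : Monotone a)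
    (ha0 : 0 ≤ a 0) (hy : ∀ i, y i ^ 2 ≤ h) (n : ℕ) :
    ∑ i ∈ Finset.range n, a i * (y i - y (i + 1)) ≤ a n ^ 2 / 4 + 4 * h := by
  have h0 : 0 ≤ h := (sq_nonneg _).trans (hy 0)
  nlinarith [sum_mul_sub_succ_le_two_mul ha ha0 (fun i => Real.abs_le_sqrt (hy i)) n,
    sq_nonneg (a n / 2 - 2 * √h), Real.sq_sqrt h0]

theorem sq_min_le_of_decomposition {y m k : ℕ → ℝ} {h c : ℝ} (hk : Monotone k) (hk0 : k 0 = 0)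
    (hc : 0 ≤ c) (hdec : ∀ i, y i = y 0 + m i - k i) (hy : ∀ i, y i ^ 2 ≤ h) (n : ℕ) :
    min (k n) c ^ 2 ≤ 16 * h + 4 * ∑ i ∈ Finset.range n, min (k i) c * (m (i + 1) - m i)
      + 2 * ∑ i ∈ Finset.range n, (min (k (i + 1)) c - min (k i) c) ^ 2 := by
  have hsplit : ∑ i ∈ Finset.range n, min (k i) c * (k (i + 1) - k i)
      = ∑ i ∈ Finset.range n, min (k i) c * (y i - y (i + 1))
        + ∑ i ∈ Finset.range n, min (k i) c * (m (i + 1) - m i) := by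
    rw [← Finset.sum_add_distrib]
    refine Finset.sum_congr rfl fun i _ => ?_
    rw [hdec i, hdec (i + 1)]
    ring
  have hY := sum_mul_sub_succ_le_sq_div_four_add (fun i j hij => min_le_min_right c (hk hij))
    (le_min hk0.ge hc) hy n
  linarith [sq_min_le_two_sum_mul_sub_add_sum_sq hk hk0 hc n]

theorem sum_sq_sub_le_mul {a : ℕ → ℝ} (ha : Monotone a) {δ : ℝ} {n : ℕ}
    (hδ : ∀ i < n, a (i + 1) - a i ≤ δ) :
    ∑ i ∈ Finset.range n, (a (i + 1) - a i) ^ 2 ≤ δ * (a n - a 0) := by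
  rw [← Finset.sum_range_sub, Finset.mul_sum]
  refine Finset.sum_le_sum fun i hi => ?_
  rw [sq]
  exact mul_le_mul_of_nonneg_right (hδ i (Finset.mem_range.1 hi)) (sub_nonneg.2 (ha i.le_succ))

noncomputable def uniformGrid (T : ℝ) (n i : ℕ) : ℝ := min (i * T / n) T

section UniformGrid

variable {T : ℝ} {n : ℕ}

theorem uniformGrid_zero (hT : 0 ≤ T) : uniformGrid T n 0 = 0 := by
  simp [uniformGrid, hT]

theorem uniformGrid_self (hn : n ≠ 0) : uniformGrid T n n = T := by
  simp [uniformGrid, mul_div_cancel_left₀ T (Nat.cast_ne_zero.2 hn)]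

theorem uniformGrid_mem (hT : 0 ≤ T) (i : ℕ) : uniformGrid T n i ∈ Icc 0 T :=
  ⟨le_min (by positivity) hT, min_le_right _ _⟩

theorem monotone_uniformGrid (hT : 0 ≤ T) : Monotone (uniformGrid T n) := fun i j hij =>
  min_le_min_right T (by gcongr)

theorem uniformGrid_succ_sub_le (hT : 0 ≤ T) (i : ℕ) :
    uniformGrid T n (i + 1) - uniformGrid T n i ≤ T / n := by
  refine (min_sub_min_le_sub T (by gcongr; simp)).trans_eq ?_
  push_cast
  ring

end UniformGrid

noncomputable def gridQuadVar (f : ℝ → ℝ) (T : ℝ) (n : ℕ) : ℝ :=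
  ∑ i ∈ Finset.range n, (f (uniformGrid T n (i + 1)) - f (uniformGrid T n i)) ^ 2

section GridQuadVar

variable {f : ℝ → ℝ} {T : ℝ}

theorem gridQuadVar_nonneg (n : ℕ) : 0 ≤ gridQuadVar f T n :=
  Finset.sum_nonneg fun _ _ => sq_nonneg _

theorem gridQuadVar_le_mul (hT : 0 ≤ T) (hf : MonotoneOn f (Icc 0 T)) {δ : ℝ} {n : ℕ}
    (hδ : ∀ i, f (uniformGrid T n (i + 1)) - f (uniformGrid T n i) ≤ δ) :
    gridQuadVar f T n ≤ δ * (f T - f 0) := by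
  have hmem := uniformGrid_mem (n := n) hT
  have hmono : Monotone fun i => f (uniformGrid T n i) := fun i j hij =>
    hf (hmem i) (hmem j) (monotone_uniformGrid hT hij)
  refine (sum_sq_sub_le_mul hmono fun i _ => hδ i).trans (mul_le_mul_of_nonneg_left ?_ ?_)
  · rw [uniformGrid_zero hT]
    exact sub_le_sub_right (hf (hmem n) ⟨hT, le_rfl⟩ (hmem n).2) _
  · exact (sub_nonneg.2 (hmono (Nat.le_succ 0))).trans (hδ 0)

theorem gridQuadVar_le_sq (hT : 0 ≤ T) (hf : MonotoneOn f (Icc 0 T)) (n : ℕ) :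
    gridQuadVar f T n ≤ (f T - f 0) ^ 2 := by
  have hmem := uniformGrid_mem (n := n) hT
  rw [sq]
  refine gridQuadVar_le_mul hT hf fun i => sub_le_sub ?_ ?_
  · exact hf (hmem _) ⟨hT, le_rfl⟩ (hmem _).2
  · exact hf ⟨le_rfl, hT⟩ (hmem _) (hmem _).1

theorem tendsto_gridQuadVar_zero (hT : 0 ≤ T) (hfc : ContinuousOn f (Icc 0 T))
    (hf : MonotoneOn f (Icc 0 T)) : Tendsto (gridQuadVar f T) atTop (𝓝 0) := by
  rw [Metric.tendsto_nhds]
  intro ε hε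
  set ε' := ε / (f T - f 0 + 1)
  have hosc : 0 ≤ f T - f 0 := sub_nonneg.2 (hf ⟨le_rfl, hT⟩ ⟨hT, le_rfl⟩ hT)
  have hε' : 0 < ε' := by positivity
  obtain ⟨δ, hδ, hfδ⟩ := Metric.uniformContinuousOn_iff.1
    (isCompact_Icc.uniformContinuousOn_of_continuous hfc) ε' hε'
  filter_upwards [(tendsto_const_div_atTop_nhds_zero_nat T).eventually (gt_mem_nhds hδ)]
    with n hn
  have hmem := uniformGrid_mem (n := n) hT
  have hincr : ∀ i, f (uniformGrid T n (i + 1)) - f (uniformGrid T n i) ≤ ε' := by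
    intro i
    refine (le_abs_self _).trans (le_of_lt ?_)
    rw [← Real.dist_eq]
    refine hfδ _ (hmem _) _ (hmem _) ?_
    rw [Real.dist_eq, abs_of_nonneg (sub_nonneg.2 (monotone_uniformGrid hT i.le_succ))]
    exact (uniformGrid_succ_sub_le hT i).trans_lt hn
  rw [Real.dist_eq, sub_zero, abs_of_nonneg (gridQuadVar_nonneg n)]
  calc gridQuadVar f T n ≤ ε' * (f T - f 0) := gridQuadVar_le_mul hT hf hincr
    _ < ε' * (f T - f 0 + 1) := by gcongr; linarith
    _ = ε := div_mul_cancel₀ ε (by positivity)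

end GridQuadVar

namespace MeasureTheory

variable {Ω ι κ : Type*} {m0 : MeasurableSpace Ω} {μ : Measure Ω} [Preorder ι] [Preorder κ]

def Filtration.reindex (ℱ : Filtration ι m0) (τ : κ → ι) (hτ : Monotone τ) : Filtration κ m0 :=
  ⟨fun i => ℱ (τ i), fun _ _ hij => ℱ.mono (hτ hij), fun i => ℱ.le (τ i)⟩

namespace Martingale

variable {ℱ : Filtration ι m0} {M : ι → Ω → ℝ}

theorem reindex (hM : Martingale M ℱ μ) {τ : κ → ι} (hτ : Monotone τ) :
    Martingale (fun i => M (τ i)) (ℱ.reindex τ hτ) μ :=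
  ⟨fun i => hM.stronglyAdapted (τ i), fun _ _ hij => hM.condExp_ae_eq (hτ hij)⟩

theorem integral_mul_sub_eq_zero [IsFiniteMeasure μ] (hM : Martingale M ℱ μ) {s t : ι}
    (hst : s ≤ t) {a : Ω → ℝ} {c : ℝ} (ha : StronglyMeasurable[ℱ s] a) (hac : ∀ ω, ‖a ω‖ ≤ c) :
    ∫ ω, a ω * (M t ω - M s ω) ∂μ = 0 := by
  have hint : ∀ u, Integrable (fun ω => a ω * M u ω) μ := fun u =>
    (hM.integrable u).bdd_mul (ha.mono (ℱ.le s)).aestronglyMeasurable (Eventually.of_forall hac)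
  simp_rw [mul_sub]
  rw [integral_sub (hint t) (hint s), sub_eq_zero]
  calc ∫ ω, a ω * M t ω ∂μ = ∫ ω, (μ[fun ω => a ω * M t ω | ℱ s]) ω ∂μ :=
        (integral_condExp (ℱ.le s)).symm
    _ = ∫ ω, a ω * (μ[M t | ℱ s]) ω ∂μ := integral_congr_ae <|
        condExp_stronglyMeasurable_mul_of_bound (ℱ.le s) ha (hM.integrable t) c
          (Eventually.of_forall hac)
    _ = ∫ ω, a ω * M s ω ∂μ := integral_congr_ae <| by
        filter_upwards [hM.condExp_ae_eq hst] with ω h using by rw [h]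

end Martingale

end MeasureTheory

section DiscreteDecomposition

variable {Ω : Type*} {m0 : MeasurableSpace Ω} {μ : Measure Ω} [IsFiniteMeasure μ]
  {𝒢 : Filtration ℕ m0} {y m k : ℕ → Ω → ℝ}

theorem integral_sq_min_le_of_decomposition (hm : Martingale m 𝒢 μ) (hk : Adapted 𝒢 k)
    (hkmono : ∀ ω, Monotone (k · ω)) (hk0 : ∀ ω, k 0 ω = 0)
    (hdec : ∀ i ω, y i ω = y 0 ω + m i ω - k i ω) {H : Ω → ℝ} (hH : Integrable H μ)
    (hyH : ∀ i ω, y i ω ^ 2 ≤ H ω) {c : ℝ} (hc : 0 ≤ c) (n : ℕ) :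
    ∫ ω, min (k n ω) c ^ 2 ∂μ ≤ 16 * ∫ ω, H ω ∂μ
      + 2 * ∫ ω, ∑ i ∈ Finset.range n, (min (k (i + 1) ω) c - min (k i ω) c) ^ 2 ∂μ := by
  set a : ℕ → Ω → ℝ := fun i ω => min (k i ω) c
  have ha0 : ∀ i ω, 0 ≤ a i ω := fun i ω => le_min (hk0 ω ▸ hkmono ω i.zero_le) hc
  have hac : ∀ i ω, ‖a i ω‖ ≤ c := fun i ω => by
    rw [Real.norm_of_nonneg (ha0 i ω)]; exact min_le_right _ _
  have ha : ∀ i, StronglyMeasurable[𝒢 i] (a i) := fun i =>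
    ((hk i).min measurable_const).stronglyMeasurable
  have ha' : ∀ i, AEStronglyMeasurable (a i) μ := fun i =>
    ((ha i).mono (𝒢.le i)).aestronglyMeasurable
  have hsq : ∀ i j ω, ‖(a i ω - a j ω) ^ 2‖ ≤ c ^ 2 := fun i j ω => by
    rw [norm_pow]
    exact pow_le_pow_left₀ (norm_nonneg _) (abs_sub_le_of_nonneg_of_le (ha0 i ω)
      ((le_abs_self _).trans (hac i ω)) (ha0 j ω) ((le_abs_self _).trans (hac j ω))) 2
  have hanint : Integrable (fun ω => a n ω ^ 2) μ :=
    .of_bound ((ha' n).pow 2) (c ^ 2) (Eventually.of_forall fun ω => by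
      rw [norm_pow]; exact pow_le_pow_left₀ (norm_nonneg _) (hac n ω) 2)
  have hW : Integrable (fun ω => ∑ i ∈ Finset.range n, (a (i + 1) ω - a i ω) ^ 2) μ :=
    integrable_finsetSum _ fun i _ =>
      .of_bound (((ha' _).sub (ha' _)).pow 2) (c ^ 2) (Eventually.of_forall (hsq _ _))
  have hdm : ∀ i, Integrable (fun ω => a i ω * (m (i + 1) ω - m i ω)) μ := fun i =>
    ((hm.integrable _).sub (hm.integrable _)).bdd_mul (ha' i) (Eventually.of_forall (hac i))
  have hmsum : Integrable (fun ω => ∑ i ∈ Finset.range n, a i ω * (m (i + 1) ω - m i ω)) μ :=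
    integrable_finsetSum _ fun i _ => hdm i
  have hHM : Integrable (fun ω =>
      16 * H ω + 4 * ∑ i ∈ Finset.range n, a i ω * (m (i + 1) ω - m i ω)) μ :=
    (hH.const_mul 16).add (hmsum.const_mul 4)
  calc ∫ ω, a n ω ^ 2 ∂μ
      ≤ ∫ ω, 16 * H ω + 4 * ∑ i ∈ Finset.range n, a i ω * (m (i + 1) ω - m i ω)
          + 2 * ∑ i ∈ Finset.range n, (a (i + 1) ω - a i ω) ^ 2 ∂μ :=
        integral_mono hanint (hHM.add (hW.const_mul 2))
          fun ω => sq_min_le_of_decomposition (hkmono ω) (hk0 ω) hc (hdec · ω) (hyH · ω) n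
    _ = 16 * ∫ ω, H ω ∂μ + 2 * ∫ ω, ∑ i ∈ Finset.range n, (a (i + 1) ω - a i ω) ^ 2 ∂μ := by
        rw [integral_add hHM (hW.const_mul 2),
          integral_add (hH.const_mul 16) (hmsum.const_mul 4), integral_const_mul,
          integral_const_mul, integral_const_mul, integral_finsetSum _ fun i _ => hdm i,
          Finset.sum_eq_zero fun i _ => hm.integral_mul_sub_eq_zero i.le_succ (ha i) (hac i),
          mul_zero, add_zero]

end DiscreteDecomposition

section ContinuousDecomposition

variable {Ω : Type*} {m0 : MeasurableSpace Ω} {μ : Measure Ω} [IsFiniteMeasure μ]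
  {ℱ : Filtration ℝ m0} {Y M K : ℝ → Ω → ℝ} {T : ℝ} {H : Ω → ℝ}

theorem integral_sq_min_le_of_continuous_decomposition (hT : 0 ≤ T) (hM : Martingale M ℱ μ)
    (hK : Adapted ℱ K) (hK0 : ∀ ω, K 0 ω = 0) (hKmono : ∀ ω, MonotoneOn (K · ω) (Icc 0 T))
    (hKcont : ∀ ω, ContinuousOn (K · ω) (Icc 0 T))
    (hdec : ∀ t ∈ Icc 0 T, ∀ ω, Y t ω = Y 0 ω + M t ω - K t ω) (hH : Integrable H μ)
    (hYH : ∀ t ∈ Icc 0 T, ∀ ω, Y t ω ^ 2 ≤ H ω) {c : ℝ} (hc : 0 ≤ c) :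
    ∫ ω, min (K T ω) c ^ 2 ∂μ ≤ 16 * ∫ ω, H ω ∂μ := by
  set W : ℕ → Ω → ℝ := fun n ω => gridQuadVar (fun t => min (K t ω) c) T n
  have hKcmono : ∀ ω, MonotoneOn (fun t => min (K t ω) c) (Icc 0 T) :=
    fun ω _ hs _ ht hst => min_le_min_right c (hKmono ω hs ht hst)
  have hbound : ∀ n ≠ 0, ∫ ω, min (K T ω) c ^ 2 ∂μ ≤ 16 * ∫ ω, H ω ∂μ + 2 * ∫ ω, W n ω ∂μ := by
    intro n hn
    have hmem := uniformGrid_mem (n := n) hT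
    have hgrid := monotone_uniformGrid (n := n) hT
    have h := integral_sq_min_le_of_decomposition (hM.reindex hgrid) (fun i => hK _)
      (fun ω i j hij => hKmono ω (hmem i) (hmem j) (hgrid hij))
      (by simpa [uniformGrid_zero hT] using hK0)
      (fun i ω => by simpa [uniformGrid_zero hT] using hdec _ (hmem i) ω) hH
      (fun i ω => hYH _ (hmem i) ω) hc n
    rwa [uniformGrid_self hn] at h
  have hWlim : Tendsto (fun n => ∫ ω, W n ω ∂μ) atTop (𝓝 0) := by
    have hKm : ∀ t, Measurable (K t) := fun t => (hK t).mono (ℱ.le t) le_rfl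
    have hWm : ∀ n, Measurable (W n) := fun n => Finset.measurable_fun_sum _ fun i _ =>
      (((hKm _).min measurable_const).sub ((hKm _).min measurable_const)).pow_const 2
    have h := tendsto_integral_of_dominated_convergence (μ := μ) (F := W) (f := fun _ => 0)
      (fun _ => c ^ 2) (fun n => (hWm n).aestronglyMeasurable) (integrable_const _)
      (fun n => Eventually.of_forall fun ω => by
        rw [Real.norm_of_nonneg (gridQuadVar_nonneg n)]
        refine (gridQuadVar_le_sq hT (hKcmono ω) n).trans ?_
        simp only [hK0 ω, min_eq_left hc, sub_zero]
        exact pow_le_pow_left₀ (le_min (hK0 ω ▸ hKmono ω ⟨le_rfl, hT⟩ ⟨hT, le_rfl⟩ hT) hc)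
          (min_le_right _ _) 2)
      (Eventually.of_forall fun ω =>
        tendsto_gridQuadVar_zero hT ((hKcont ω).inf continuousOn_const) (hKcmono ω))
    rwa [integral_zero] at h
  have hlim := (hWlim.const_mul 2).const_add (16 * ∫ ω, H ω ∂μ)
  rw [mul_zero, add_zero] at hlim
  exact ge_of_tendsto hlim ((eventually_ne_atTop 0).mono hbound)

end ContinuousDecomposition

theorem IsCompact.le_ciSup_of_continuousOn {X : Type*} [TopologicalSpace X] {s : Set X}
    (hs : IsCompact s) {f : X → ℝ} (hf : ContinuousOn f s) {x : X} (hx : x ∈ s) :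
    f x ≤ ⨆ y : s, f y :=
  le_ciSup (image_eq_range f s ▸ hs.bddAbove_image hf) ⟨x, hx⟩

section Truncation

variable {Ω : Type*} {m0 : MeasurableSpace Ω} {μ : Measure Ω}

theorem integrable_of_tendsto_of_integral_le {f : ℕ → Ω → ℝ} {g : Ω → ℝ} {C : ℝ}
    (hf : ∀ n, Integrable (f n) μ) (hf0 : ∀ n, 0 ≤ᵐ[μ] f n) (hg : AEStronglyMeasurable g μ)
    (hlim : ∀ᵐ ω ∂μ, Tendsto (f · ω) atTop (𝓝 (g ω))) (hC : ∀ n, ∫ ω, f n ω ∂μ ≤ C) :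
    Integrable g μ := by
  refine memLp_one_iff_integrable.1 ⟨hg, (Lp.eLpNorm_le_of_ae_tendsto (C := .ofReal C)
    (Eventually.of_forall fun n => ?_) (fun n => (hf n).1) hlim).trans_lt ENNReal.ofReal_lt_top⟩
  rw [eLpNorm_one_eq_lintegral_enorm, ← ofReal_integral_norm_eq_lintegral_enorm (hf n)]
  refine ENNReal.ofReal_le_ofReal (le_of_eq_of_le (integral_congr_ae ?_) (hC n))
  filter_upwards [hf0 n] with ω h using Real.norm_of_nonneg h

theorem integrable_sq_of_integral_sq_min_le [IsFiniteMeasure μ] {f : Ω → ℝ}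
    (hf : AEStronglyMeasurable f μ) (hf0 : ∀ ω, 0 ≤ f ω) {C : ℝ}
    (hC : ∀ c, 0 ≤ c → ∫ ω, min (f ω) c ^ 2 ∂μ ≤ C) : Integrable (fun ω => f ω ^ 2) μ := by
  refine integrable_of_tendsto_of_integral_le (f := fun (n : ℕ) ω => min (f ω) n ^ 2)
    (fun n => .of_bound ((hf.inf aestronglyMeasurable_const).pow 2) ((n : ℝ) ^ 2)
      (Eventually.of_forall fun ω => ?_))
    (fun n => Eventually.of_forall fun ω => sq_nonneg _) (hf.pow 2)
    (Eventually.of_forall fun ω => ?_) fun n => hC n n.cast_nonneg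
  · rw [norm_pow, Real.norm_of_nonneg (le_min (hf0 ω) n.cast_nonneg)]
    exact pow_le_pow_left₀ (le_min (hf0 ω) n.cast_nonneg) (min_le_right _ _) 2
  · refine tendsto_const_nhds.congr' ?_
    filter_upwards [tendsto_natCast_atTop_atTop.eventually_ge_atTop (f ω)] with n hn
    rw [min_eq_left hn]

end Truncation

theorem doobMeyer_square_integrable_general {Ω : Type*} {m : MeasurableSpace Ω}
    (μ : Measure Ω) [IsProbabilityMeasure μ]
    (ℱ : Filtration ℝ m) (T : ℝ) (hT : 0 < T)
    (Y M K QV : ℝ → Ω → ℝ)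
    (hYsuper : Supermartingale Y ℱ μ)
    (hM : Martingale M ℱ μ)
    (hMcont : ∀ ω, Continuous fun t => M t ω)
    (hK0 : ∀ ω, K 0 ω = 0) (hKadp : Adapted ℱ K)
    (hKmono : ∀ ω, MonotoneOn (fun t => K t ω) (Icc 0 T))
    (hKcont : ∀ ω, Continuous fun t => K t ω)
    (hdec : ∀ t ∈ Icc (0:ℝ) T, ∀ ω, Y t ω = Y 0 ω + M t ω - K t ω)
    (hQVmart : Martingale (fun t ω => (M t ω) ^ 2 - QV t ω) ℱ μ)
    (hYsq : Integrable (fun ω => ⨆ t : Icc (0:ℝ) T, |Y (t : ℝ) ω| ^ 2) μ) :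
    Integrable (fun ω => (K T ω) ^ 2) μ ∧ Integrable (fun ω => QV T ω) μ := by
  have h0 : (0 : ℝ) ∈ Icc 0 T := ⟨le_rfl, hT.le⟩
  have hTmem : T ∈ Icc 0 T := ⟨hT.le, le_rfl⟩
  have hYH : ∀ t ∈ Icc 0 T, ∀ ω, Y t ω ^ 2 ≤ ⨆ s : Icc (0:ℝ) T, |Y (s : ℝ) ω| ^ 2 := by
    intro t ht ω
    have hYcont : ContinuousOn (Y · ω) (Icc 0 T) :=
      ((continuous_const.add (hMcont ω)).sub (hKcont ω)).continuousOn.congr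
        fun s hs => hdec s hs ω
    exact (sq_abs (Y t ω)).ge.trans <| isCompact_Icc.le_ciSup_of_continuousOn
      (f := fun s => |Y s ω| ^ 2) (hYcont.abs.pow 2) ht
  have hKm : ∀ t, AEStronglyMeasurable (K t) μ := fun t =>
    ((hKadp t).mono (ℱ.le t) le_rfl).aestronglyMeasurable
  have hK2 : Integrable (fun ω => K T ω ^ 2) μ :=
    integrable_sq_of_integral_sq_min_le (hKm T)
      (fun ω => hK0 ω ▸ hKmono ω h0 hTmem hT.le) fun _ hc =>
        integral_sq_min_le_of_continuous_decomposition hT.le hM hKadp hK0 hKmono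
          (fun ω => (hKcont ω).continuousOn) hdec hYsq hYH hc
  have hYL2 : ∀ t ∈ Icc 0 T, MemLp (Y t) 2 μ := fun t ht =>
    (memLp_two_iff_integrable_sq (hYsuper.integrable t).1).2 <|
      hYsq.mono' ((hYsuper.integrable t).1.pow 2) <| Eventually.of_forall fun ω => by
        rw [Real.norm_of_nonneg (sq_nonneg _)]; exact hYH t ht ω
  have hML2 : MemLp (M T) 2 μ :=
    (((hYL2 T hTmem).sub (hYL2 0 h0)).add ((memLp_two_iff_integrable_sq (hKm T)).2 hK2)).ae_eq
      (Eventually.of_forall fun ω => by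
        simp only [Pi.add_apply, Pi.sub_apply, hdec T hTmem ω]; ring)
  exact ⟨hK2, (hML2.integrable_sq.sub (hQVmart.integrable T)).congr
    (Eventually.of_forall fun ω => sub_sub_cancel _ _)⟩

/-- Integrability estimates from the Doob–Meyer decomposition (Step 2 of Proposition 8.9):
if the continuous supermartingale `Y = Y₀ + M − K` satisfies `E[sup_{t≤T}|Y_t|²] < ∞`,
where `M` is a continuous martingale with `M₀ = 0`, `K` is a continuous nondecreasing
adapted process with `K₀ = 0`, and `QV = ⟨M⟩` is the quadratic variation of `M`
(characterized by `M² − QV` being a martingale, `QV` continuous nondecreasing, `QV₀ = 0`),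
then `E[K_T²] < ∞` and `E[⟨M⟩_T] < ∞`. -/
theorem doobMeyer_square_integrable {Ω : Type*} {m : MeasurableSpace Ω}
    (μ : Measure Ω) [IsProbabilityMeasure μ]
    (ℱ : Filtration ℝ m) (T : ℝ) (hT : 0 < T)
    (Y M K QV : ℝ → Ω → ℝ)
    (hYsuper : Supermartingale Y ℱ μ)
    (hM : Martingale M ℱ μ) (hM0 : ∀ ω, M 0 ω = 0)
    (hMcont : ∀ ω, Continuous fun t => M t ω)
    (hK0 : ∀ ω, K 0 ω = 0) (hKadp : Adapted ℱ K)
    (hKmono : ∀ ω, MonotoneOn (fun t => K t ω) (Icc 0 T))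
    (hKcont : ∀ ω, Continuous fun t => K t ω)
    (hdec : ∀ t ∈ Icc (0:ℝ) T, ∀ ω, Y t ω = Y 0 ω + M t ω - K t ω)
    (hQV0 : ∀ ω, QV 0 ω = 0)
    (hQVmono : ∀ ω, MonotoneOn (fun t => QV t ω) (Icc 0 T))
    (hQVcont : ∀ ω, Continuous fun t => QV t ω)
    (hQVmart : Martingale (fun t ω => (M t ω) ^ 2 - QV t ω) ℱ μ)
    (hYsq : Integrable (fun ω => ⨆ t : Icc (0:ℝ) T, |Y (t : ℝ) ω| ^ 2) μ) :
    Integrable (fun ω => (K T ω) ^ 2) μ ∧ Integrable (fun ω => QV T ω) μ :=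
  doobMeyer_square_integrable_general μ ℱ T hT Y M K QV hYsuper hM hMcont hK0 hKadp hKmono hKcont
    hdec hQVmart hYsq
end

section
/- In the proof of stability by semilimits: let φ ∈ C^{1,2}(Q) and ū ∈ USC(Q) with (φ−ū)(t,x) < (φ−ū)(t',x') for all (t',x') ≠ (t,x) (strict minimum). Let (ε_n, t_n, x_n) → (0, t, x) with u^{ε_n}(t_n,x_n) → ū(t,x), where ū = limsup* u^ε. If (t̄_n, x̄_n) minimizes φ − u^{ε_n} over a compact neighborhood cl(O) of (t,x) containing all (t_n,x_n), then (t̄_n, x̄_n) → (t,x) and u^{ε_n}(t̄_n, x̄_n) → ū(t,x). -/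
/-!
The pairs `(q_n, u_n(q_n))` stay in the compact set `K × [-C, C]`, so it suffices that
`(p₀, ū(p₀))` is their only cluster point. Along a subsequence converging to `(a, b)`, the
upper-limit bound gives `b ≤ ū(a)`, and passing to the limit in the minimality of `q_n`
against the competitors `p_n` gives `φ(a) - b ≤ φ(p₀) - ū(p₀)`. Together,
`φ(a) - ū(a) ≤ φ(p₀) - ū(p₀)`, so the strict minimum forces `a = p₀`, and then `b = ū(p₀)`.
-/

open Set Filter Topology

theorem eq_of_tendsto_subseq_minimizers {X : Type*} [TopologicalSpace X]
    {φ ubar : X → ℝ} {u : ℕ → X → ℝ} {K : Set X} {p₀ a : X} {b : ℝ} {pn qn : ℕ → X}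
    {σ : ℕ → ℕ} (hφ : Continuous φ)
    (hstrict : ∀ p ∈ K, p ≠ p₀ → φ p₀ - ubar p₀ < φ p - ubar p)
    (hpnK : ∀ n, pn n ∈ K) (hpn : Tendsto pn atTop (𝓝 p₀))
    (hval : Tendsto (fun n => u n (pn n)) atTop (𝓝 (ubar p₀)))
    (hqmin : ∀ n, ∀ r ∈ K, φ (qn n) - u n (qn n) ≤ φ r - u n r)
    (hσ : Tendsto σ atTop atTop) (haK : a ∈ K) (hq : Tendsto (qn ∘ σ) atTop (𝓝 a))
    (hu : Tendsto (fun k => u (σ k) (qn (σ k))) atTop (𝓝 b)) (hb : b ≤ ubar a) :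
    a = p₀ ∧ b = ubar p₀ := by
  have hlhs : Tendsto (fun k => φ (qn (σ k)) - u (σ k) (qn (σ k))) atTop (𝓝 (φ a - b)) :=
    ((hφ.tendsto a).comp hq).sub hu
  have hrhs : Tendsto (fun k => φ (pn (σ k)) - u (σ k) (pn (σ k))) atTop
      (𝓝 (φ p₀ - ubar p₀)) :=
    ((hφ.tendsto p₀).comp (hpn.comp hσ)).sub (hval.comp hσ)
  have hle : φ a - b ≤ φ p₀ - ubar p₀ :=
    le_of_tendsto_of_tendsto' hlhs hrhs fun k => hqmin (σ k) _ (hpnK (σ k))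
  have ha : a = p₀ := by
    by_contra hne
    linarith [hstrict a haK hne]
  subst ha
  exact ⟨rfl, by linarith⟩

theorem minimizers_converge_general (dd : ℕ)
    (φ : (ℝ × (Fin dd → ℝ)) → ℝ) (hφ : Continuous φ)
    (ubar : (ℝ × (Fin dd → ℝ)) → ℝ)
    (u : ℕ → (ℝ × (Fin dd → ℝ)) → ℝ)
    (K : Set (ℝ × (Fin dd → ℝ))) (hK : IsCompact K)
    (p₀ : ℝ × (Fin dd → ℝ))
    (hstrict : ∀ p ∈ K, p ≠ p₀ → φ p₀ - ubar p₀ < φ p - ubar p)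
    (hub : ∀ σ : ℕ → ℕ, StrictMono σ →
      ∀ (q : ℕ → ℝ × (Fin dd → ℝ)) (qlim : ℝ × (Fin dd → ℝ)),
        Tendsto q atTop (nhds qlim) →
        limsup (fun n => u (σ n) (q n)) atTop ≤ ubar qlim)
    (hbdd : ∃ C : ℝ, ∀ n, ∀ p ∈ K, |u n p| ≤ C)
    (pn : ℕ → ℝ × (Fin dd → ℝ)) (hpnK : ∀ n, pn n ∈ K)
    (hpn : Tendsto pn atTop (nhds p₀))
    (hval : Tendsto (fun n => u n (pn n)) atTop (nhds (ubar p₀)))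
    (qn : ℕ → ℝ × (Fin dd → ℝ)) (hqnK : ∀ n, qn n ∈ K)
    (hqmin : ∀ n, ∀ r ∈ K, φ (qn n) - u n (qn n) ≤ φ r - u n r) :
    Tendsto qn atTop (nhds p₀) ∧
    Tendsto (fun n => u n (qn n)) atTop (nhds (ubar p₀)) := by
  obtain ⟨C, hC⟩ := hbdd
  have hmem : ∀ n, (qn n, u n (qn n)) ∈ K ×ˢ Icc (-C) C :=
    fun n => ⟨hqnK n, abs_le.mp (hC n _ (hqnK n))⟩
  have hpair : Tendsto (fun n => (qn n, u n (qn n))) atTop (𝓝 (p₀, ubar p₀)) := by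
    refine (hK.prod isCompact_Icc).tendsto_nhds_of_unique_mapClusterPt (.of_forall hmem) ?_
    rintro ⟨a, b⟩ ⟨haK, -⟩ hcluster
    obtain ⟨σ, hσ, hlim⟩ := hcluster.tendsto_subseq
    have hu : Tendsto (fun k => u (σ k) (qn (σ k))) atTop (𝓝 b) := hlim.snd_nhds
    have hb : b ≤ ubar a := hu.limsup_eq ▸ hub σ hσ _ a hlim.fst_nhds
    obtain ⟨ha, hb'⟩ := eq_of_tendsto_subseq_minimizers hφ hstrict hpnK hpn hval hqmin
      hσ.tendsto_atTop haK hlim.fst_nhds hu hb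
    exact Prod.ext ha hb'
  exact ⟨hpair.fst_nhds, hpair.snd_nhds⟩

/-- Compactness claim (2.16) in the proof of the stability Theorem 2.6: let `φ` be
continuous and `ū` have a strict minimum of `φ − ū` at `p₀` on the compact set `K`; if
`p_n → p₀` with `u_n(p_n) → ū(p₀)`, `ū` dominates the relaxed upper limits of `(u_n)`
along converging sequences, and `q_n` minimizes `φ − u_n` over `K`, then `q_n → p₀` and
`u_n(q_n) → ū(p₀)`. -/
theorem minimizers_converge (dd : ℕ)
    (φ : (ℝ × (Fin dd → ℝ)) → ℝ) (hφ : Continuous φ)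
    (ubar : (ℝ × (Fin dd → ℝ)) → ℝ)
    (u : ℕ → (ℝ × (Fin dd → ℝ)) → ℝ)
    (K : Set (ℝ × (Fin dd → ℝ))) (hK : IsCompact K)
    (p₀ : ℝ × (Fin dd → ℝ)) (hp₀ : p₀ ∈ K)
    (hstrict : ∀ p ∈ K, p ≠ p₀ → φ p₀ - ubar p₀ < φ p - ubar p)
    (hub : ∀ σ : ℕ → ℕ, StrictMono σ →
      ∀ (q : ℕ → ℝ × (Fin dd → ℝ)) (qlim : ℝ × (Fin dd → ℝ)),
        Tendsto q atTop (nhds qlim) →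
        limsup (fun n => u (σ n) (q n)) atTop ≤ ubar qlim)
    (hbdd : ∃ C : ℝ, ∀ n, ∀ p ∈ K, |u n p| ≤ C)
    (pn : ℕ → ℝ × (Fin dd → ℝ)) (hpnK : ∀ n, pn n ∈ K)
    (hpn : Tendsto pn atTop (nhds p₀))
    (hval : Tendsto (fun n => u n (pn n)) atTop (nhds (ubar p₀)))
    (qn : ℕ → ℝ × (Fin dd → ℝ)) (hqnK : ∀ n, qn n ∈ K)
    (hqmin : ∀ n, ∀ r ∈ K, φ (qn n) - u n (qn n) ≤ φ r - u n r) :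
    Tendsto qn atTop (nhds p₀) ∧
    Tendsto (fun n => u n (qn n)) atTop (nhds (ubar p₀)) :=
  minimizers_converge_general dd φ hφ ubar u K hK p₀ hstrict hub hbdd pn hpnK hpn hval qn hqnK hqmin
end
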